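/- arXiv:1306.2003 — 2 statements merged into one kernel-verified Lean document; each statement's English description precedes it below -/
import Mathlib

section
/- Let m ≥ 1 be an integer, L ≥ m a real number, Σ an m×m Hermitian positive definite complex matrix, and β ∈ (0,1). Set q := β·L + (1−β)·m (equivalently q = L + (1−β)(m−L), so m ≤ q ≤ L) and Σ' := (q/(β·L))·Σ. Then for every m×m Hermitian positive definite complex matrix Z one has the pointwise identity f(Z;Σ,L)^β = [Γ_m(q) · det(Σ)^{(1−β)m} / (Γ_m(L)^β · β^{mq} · L^{(1−β)m²})] · f(Z;Σ',q). (This identity underlies the closed-form Rényi entropy of order β of the scaled complex Wishart law.) -/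
/-
Taking logarithms, both sides become affine in `log (pdet Z)` and in `rtrace (S⁻¹ * Z)`.
The exponent of `pdet Z` is `β (L - m) = q - m` on both sides, and the scaling
`S' = (q / (β L)) • S` is chosen precisely so that `q · tr(S'⁻¹ Z) = β L · tr(S⁻¹ Z)`.
What remains is a constant: `det S' = (q / (β L))^m det S` contributes the powers of `q`, `β`,
`L` and `det S`, and the normalising multivariate gamma factors are carried along unchanged.
-/

open Matrix ComplexOrder

/-- Real (positive) determinant of a Hermitian positive definite complex matrix. -/
noncomputable def pdet {m : ℕ} (A : Matrix (Fin m) (Fin m) ℂ) : ℝ := A.det.re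

/-- Real trace. -/
noncomputable def rtrace {m : ℕ} (A : Matrix (Fin m) (Fin m) ℂ) : ℝ := A.trace.re

/-- Multivariate gamma function Γ_m(L) = π^{m(m−1)/2} ∏_{i=0}^{m−1} Γ(L−i). -/
noncomputable def mGamma (m : ℕ) (L : ℝ) : ℝ :=
  Real.pi ^ (m * (m - 1) / 2) * ∏ i ∈ Finset.range m, Real.Gamma (L - i)

/-- Scaled complex Wishart density. -/
noncomputable def wdens (m : ℕ) (L : ℝ) (S Z : Matrix (Fin m) (Fin m) ℂ) : ℝ :=
  L ^ ((m : ℝ) * L) * pdet Z ^ (L - (m : ℝ)) * Real.exp (-(L * rtrace (S⁻¹ * Z)))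
    / (pdet S ^ L * mGamma m L)

lemma pdet_pos {m : ℕ} {A : Matrix (Fin m) (Fin m) ℂ} (hA : A.PosDef) : 0 < pdet A :=
  (Complex.lt_def.mp hA.det_pos).1

lemma pdet_ofReal_smul {m : ℕ} (c : ℝ) (A : Matrix (Fin m) (Fin m) ℂ) :
    pdet ((c : ℂ) • A) = c ^ m * pdet A := by
  rw [pdet, det_smul, Fintype.card_fin, ← Complex.ofReal_pow, Complex.re_ofReal_mul, pdet]

lemma rtrace_ofReal_smul {m : ℕ} (c : ℝ) (A : Matrix (Fin m) (Fin m) ℂ) :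
    rtrace ((c : ℂ) • A) = c * rtrace A := by
  rw [rtrace, trace_smul, smul_eq_mul, Complex.re_ofReal_mul, rtrace]

lemma rtrace_inv_ofReal_smul_mul {m : ℕ} {c : ℝ} (hc : c ≠ 0)
    {S : Matrix (Fin m) (Fin m) ℂ} (hS : IsUnit S.det) (Z : Matrix (Fin m) (Fin m) ℂ) :
    rtrace (((c : ℂ) • S)⁻¹ * Z) = c⁻¹ * rtrace (S⁻¹ * Z) := by
  have hinv : ((c : ℂ) • S)⁻¹ = ((c⁻¹ : ℝ) : ℂ) • S⁻¹ := by
    rw [Complex.ofReal_inv]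
    exact inv_smul' S (Units.mk0 (c : ℂ) (Complex.ofReal_ne_zero.mpr hc)) hS
  rw [hinv, smul_mul, rtrace_ofReal_smul]

lemma log_pdet_ofReal_smul {m : ℕ} {c : ℝ} (hc : 0 < c) {A : Matrix (Fin m) (Fin m) ℂ}
    (hA : A.PosDef) : Real.log (pdet ((c : ℂ) • A)) = m * Real.log c + Real.log (pdet A) := by
  rw [pdet_ofReal_smul, Real.log_mul (by positivity) (pdet_pos hA).ne', Real.log_pow]

lemma mGamma_pos {m : ℕ} {L : ℝ} (h : (m : ℝ) ≤ L) : 0 < mGamma m L := by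
  refine mul_pos (pow_pos Real.pi_pos _) (Finset.prod_pos fun i hi => Real.Gamma_pos_of_pos ?_)
  have : (i : ℝ) < m := by exact_mod_cast Finset.mem_range.mp hi
  linarith

section Density

variable {m : ℕ} {L : ℝ} {S Z : Matrix (Fin m) (Fin m) ℂ}

lemma wdens_pos (hL : 0 < L) (hΓ : 0 < mGamma m L) (hS : S.PosDef) (hZ : Z.PosDef) :
    0 < wdens m L S Z := by
  have := pdet_pos hS
  have := pdet_pos hZ
  unfold wdens
  positivity

lemma log_wdens (hL : 0 < L) (hΓ : 0 < mGamma m L) (hS : S.PosDef) (hZ : Z.PosDef) :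
    Real.log (wdens m L S Z)
      = m * L * Real.log L + (L - m) * Real.log (pdet Z) - L * rtrace (S⁻¹ * Z)
        - L * Real.log (pdet S) - Real.log (mGamma m L) := by
  have hS0 := pdet_pos hS
  have hZ0 := pdet_pos hZ
  rw [wdens, Real.log_div (by positivity) (by positivity), Real.log_mul (by positivity)
      (by positivity), Real.log_mul (by positivity) (by positivity),
    Real.log_mul (by positivity) (by positivity), Real.log_rpow hL, Real.log_rpow hZ0,
    Real.log_rpow hS0, Real.log_exp]
  ring

end Density

theorem stmt3 (m : ℕ) (hm : 1 ≤ m) (L : ℝ) (hL : (m : ℝ) ≤ L)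
    (S : Matrix (Fin m) (Fin m) ℂ) (hS : S.PosDef)
    (β : ℝ) (hβ : β ∈ Set.Ioo (0 : ℝ) 1)
    (q : ℝ) (hq : q = β * L + (1 - β) * m)
    (S' : Matrix (Fin m) (Fin m) ℂ) (hS' : S' = ((q / (β * L) : ℝ) : ℂ) • S) :
    q = L + (1 - β) * ((m : ℝ) - L) ∧ (m : ℝ) ≤ q ∧ q ≤ L ∧
    ∀ Z : Matrix (Fin m) (Fin m) ℂ, Z.PosDef →
      wdens m L S Z ^ β
        = (mGamma m q * pdet S ^ ((1 - β) * (m : ℝ))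
            / (mGamma m L ^ β * β ^ ((m : ℝ) * q) * L ^ ((1 - β) * (m : ℝ) ^ 2)))
          * wdens m q S' Z := by
  obtain ⟨hβ0, hβ1⟩ := hβ
  have hm1 : (1 : ℝ) ≤ m := by exact_mod_cast hm
  have hmq : (m : ℝ) ≤ q := by nlinarith
  have hqL : q ≤ L := by nlinarith
  refine ⟨by rw [hq]; ring, hmq, hqL, fun Z hZ => ?_⟩
  have hL0 : 0 < L := by linarith
  have hq0 : 0 < q := by linarith
  have hc0 : 0 < q / (β * L) := by positivity
  have hS'pd : S'.PosDef := hS' ▸ hS.smul (Complex.zero_lt_real.mpr hc0)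
  have hΓL := mGamma_pos hL
  have hΓq := mGamma_pos hmq
  have hS0 := pdet_pos hS
  have hw := wdens_pos hL0 hΓL hS hZ
  have hw' := wdens_pos hq0 hΓq hS'pd hZ
  have hK : 0 < mGamma m q * pdet S ^ ((1 - β) * (m : ℝ))
      / (mGamma m L ^ β * β ^ ((m : ℝ) * q) * L ^ ((1 - β) * (m : ℝ) ^ 2)) := by positivity
  have htr' : q * rtrace (S'⁻¹ * Z) = β * L * rtrace (S⁻¹ * Z) := by
    rw [hS', rtrace_inv_ofReal_smul_mul hc0.ne' ((isUnit_iff_isUnit_det S).mp hS.isUnit)]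
    field_simp
  refine Real.log_injOn_pos (Real.rpow_pos_of_pos hw β) (mul_pos hK hw') ?_
  rw [Real.log_rpow hw, Real.log_mul hK.ne' hw'.ne', log_wdens hL0 hΓL hS hZ,
    log_wdens hq0 hΓq hS'pd hZ, htr', hS', log_pdet_ofReal_smul hc0 hS,
    Real.log_div hq0.ne' (by positivity), Real.log_mul hβ0.ne' hL0.ne',
    Real.log_div (by positivity) (by positivity),
    Real.log_mul (by positivity) (by positivity), Real.log_mul (by positivity) (by positivity),
    Real.log_mul (by positivity) (by positivity), Real.log_rpow hS0, Real.log_rpow hΓL,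
    Real.log_rpow hβ0, Real.log_rpow hL0, hq]
  ring
end

section
/- Let L > 0 and σ₁², σ₂² > 0 be real numbers, and let f₁(z) = f(z;σ₁²,L) and f₂(z) = f(z;σ₂²,L) be the corresponding gamma densities. Then both the difference of Shannon entropies and, for every β ∈ (0,1), the difference of Rényi entropies of order β between the two laws equal log(σ₁²/σ₂²): that is, (−∫₀^∞ f₁ log f₁) − (−∫₀^∞ f₂ log f₂) = log(σ₁²/σ₂²), and (1−β)⁻¹ log∫₀^∞ f₁^β − (1−β)⁻¹ log∫₀^∞ f₂^β = log(σ₁²/σ₂²). In particular, the entropy difference used by the entropy-based edge detectors does not depend on the entropy (Shannon or Rényi-β) chosen, for fixed equal number of looks L. -/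
/-! With `c = σ₁²/σ₂²` the two densities are rescalings of each other, `f₁(c z) = c⁻¹ f₂(z)`.
The substitution `z ↦ c z` then shifts the Shannon entropy of a probability density by `log c`
and multiplies `∫ f^β` by `c^(1-β)`, which shifts the Rényi entropy of order `β` by `log c` too. -/

/-- Single-channel (m = 1) scaled Wishart density: the gamma density with shape `L`
and rate `L/σ²`, i.e. `f(z;σ²,L) = L^L z^{L−1} exp(−Lz/σ²) / (σ^{2L} Γ(L))`. -/
noncomputable def gdens (L s2 : ℝ) (z : ℝ) : ℝ :=
  L ^ L * z ^ (L - 1) * Real.exp (-(L * z / s2)) / (s2 ^ L * Real.Gamma L)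

open MeasureTheory Set Real

lemma integrableOn_rpow_mul_exp_neg_mul_Ioi {s r : ℝ} (hs : -1 < s) (hr : 0 < r) :
    IntegrableOn (fun z : ℝ => z ^ s * exp (-(r * z))) (Ioi 0) := by
  simpa [rpow_one, neg_mul] using integrableOn_rpow_mul_exp_neg_mul_rpow hs one_pos hr

lemma abs_log_le_rpow_neg_div_add_self {z ε : ℝ} (hz : 0 < z) (hε : 0 < ε) :
    |log z| ≤ z ^ (-ε) / ε + z := by
  have hle : log z ≤ z := (log_le_sub_one_of_pos hz).trans (by linarith)
  have hge : -log z ≤ z ^ (-ε) / ε := by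
    calc -log z = log z⁻¹ := (log_inv z).symm
      _ ≤ z⁻¹ ^ ε / ε := log_le_rpow_div (by positivity) hε
      _ = z ^ (-ε) / ε := by rw [inv_rpow hz.le, rpow_neg hz.le]
  have : 0 ≤ z ^ (-ε) / ε := by positivity
  exact abs_le.2 ⟨by linarith, by linarith⟩

lemma integrableOn_rpow_mul_exp_neg_mul_mul_log_Ioi {s r : ℝ} (hs : -1 < s) (hr : 0 < r) :
    IntegrableOn (fun z : ℝ => z ^ s * exp (-(r * z)) * log z) (Ioi 0) := by
  set ε := (s + 1) / 2 with hε_def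
  have hε : 0 < ε := by rw [hε_def]; linarith
  have hdom : IntegrableOn
      (fun z : ℝ => ε⁻¹ * (z ^ (s - ε) * exp (-(r * z))) + z ^ (s + 1) * exp (-(r * z)))
      (Ioi 0) :=
    ((integrableOn_rpow_mul_exp_neg_mul_Ioi (by rw [hε_def]; linarith) hr).const_mul _).add
      (integrableOn_rpow_mul_exp_neg_mul_Ioi (by linarith) hr)
  refine hdom.mono' (by fun_prop) ?_
  filter_upwards [ae_restrict_mem measurableSet_Ioi] with z (hz : 0 < z)
  have hnn : 0 ≤ z ^ s * exp (-(r * z)) := by positivity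
  calc ‖z ^ s * exp (-(r * z)) * log z‖ = z ^ s * exp (-(r * z)) * |log z| := by
        rw [norm_mul, norm_of_nonneg hnn, norm_eq_abs]
    _ ≤ z ^ s * exp (-(r * z)) * (z ^ (-ε) / ε + z) :=
        mul_le_mul_of_nonneg_left (abs_log_le_rpow_neg_div_add_self hz hε) hnn
    _ = ε⁻¹ * (z ^ (s - ε) * exp (-(r * z))) + z ^ (s + 1) * exp (-(r * z)) := by
        rw [sub_eq_add_neg, rpow_add hz, rpow_add hz, rpow_one]
        ring

lemma setIntegral_Ioi_pos_of_pos {f : ℝ → ℝ} {a : ℝ} (hf : IntegrableOn f (Ioi a))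
    (hpos : ∀ x ∈ Ioi a, 0 < f x) : 0 < ∫ x in Ioi a, f x := by
  rw [setIntegral_pos_iff_support_of_nonneg_ae _ hf]
  · calc (0 : ENNReal) < volume (Ioi a) := by simp
      _ ≤ volume (Function.support f ∩ Ioi a) :=
        measure_mono fun x hx => ⟨(hpos x hx).ne', hx⟩
  · filter_upwards [ae_restrict_mem measurableSet_Ioi] with x hx
    exact (hpos x hx).le

section Scaling

variable {f g : ℝ → ℝ} {c : ℝ}

lemma integral_negMulLog_Ioi_of_scaling (hc : 0 < c)
    (hfg : ∀ x ∈ Ioi 0, f (c * x) = c⁻¹ * g x) (hg : IntegrableOn g (Ioi 0))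
    (hgg : IntegrableOn (fun x => negMulLog (g x)) (Ioi 0)) :
    ∫ x in Ioi 0, negMulLog (f x) =
      (∫ x in Ioi 0, negMulLog (g x)) + log c * ∫ x in Ioi 0, g x := by
  have hsub := integral_comp_mul_left_Ioi (fun x => negMulLog (f x)) 0 hc
  rw [mul_zero, smul_eq_mul] at hsub
  have hpt : ∀ x ∈ Ioi (0 : ℝ),
      negMulLog (f (c * x)) = c⁻¹ * (negMulLog (g x) + log c * g x) := by
    intro x hx
    rw [hfg x hx, negMulLog_mul, negMulLog, log_inv]
    ring
  rw [setIntegral_congr_fun measurableSet_Ioi hpt, integral_const_mul,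
    integral_add hgg (hg.const_mul _), integral_const_mul] at hsub
  field_simp at hsub
  exact hsub.symm

lemma integral_rpow_Ioi_of_scaling (hc : 0 < c)
    (hfg : ∀ x ∈ Ioi 0, f (c * x) = c⁻¹ * g x) (hg : ∀ x ∈ Ioi 0, 0 ≤ g x) (β : ℝ) :
    ∫ x in Ioi 0, f x ^ β = c ^ (1 - β) * ∫ x in Ioi 0, g x ^ β := by
  have hsub := integral_comp_mul_left_Ioi (fun x => f x ^ β) 0 hc
  rw [mul_zero, smul_eq_mul] at hsub
  have hpt : ∀ x ∈ Ioi (0 : ℝ), f (c * x) ^ β = c ^ (-β) * g x ^ β := by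
    intro x hx
    rw [hfg x hx, mul_rpow (by positivity) (hg x hx), inv_rpow hc.le, rpow_neg hc.le]
  rw [setIntegral_congr_fun measurableSet_Ioi hpt, integral_const_mul] at hsub
  rw [sub_eq_add_neg, rpow_add hc, rpow_one]
  field_simp at hsub ⊢
  linarith

end Scaling

lemma gdens_eq_const_mul (L s z : ℝ) :
    gdens L s z = L ^ L / (s ^ L * Gamma L) * (z ^ (L - 1) * exp (-(L / s * z))) := by
  rw [gdens, show L * z / s = L / s * z by ring]
  ring

section GammaDensity

variable {L s : ℝ}

lemma gdens_pos (hL : 0 < L) (hs : 0 < s) {z : ℝ} (hz : 0 < z) : 0 < gdens L s z := by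
  have := Gamma_pos_of_pos hL
  unfold gdens
  positivity

lemma gdens_mul_mul {c z : ℝ} (hc : 0 < c) (hs : 0 ≤ s) (hz : 0 ≤ z) :
    gdens L (c * s) (c * z) = c⁻¹ * gdens L s z := by
  have hcL : c ^ L ≠ 0 := (rpow_pos_of_pos hc L).ne'
  rw [gdens, gdens, mul_rpow hc.le hz, mul_rpow hc.le hs, rpow_sub_one hc.ne',
    mul_left_comm L c, mul_div_mul_left _ _ hc.ne']
  field_simp

lemma integrableOn_gdens (hL : 0 < L) (hs : 0 < s) : IntegrableOn (gdens L s) (Ioi 0) := by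
  simp_rw [funext (gdens_eq_const_mul L s)]
  exact (integrableOn_rpow_mul_exp_neg_mul_Ioi (by linarith) (by positivity)).const_mul _

lemma integral_gdens (hL : 0 < L) (hs : 0 < s) : ∫ z in Ioi 0, gdens L s z = 1 := by
  have := Gamma_pos_of_pos hL
  simp_rw [gdens_eq_const_mul L s]
  rw [integral_const_mul, integral_rpow_mul_exp_neg_mul_Ioi hL (by positivity), one_div, inv_div,
    div_rpow hs.le hL.le]
  field_simp

lemma integrableOn_negMulLog_gdens (hL : 0 < L) (hs : 0 < s) :
    IntegrableOn (fun z => negMulLog (gdens L s z)) (Ioi 0) := by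
  set K := L ^ L / (s ^ L * Gamma L)
  have hK : 0 < K := by have := Gamma_pos_of_pos hL; positivity
  have hr : 0 < L / s := by positivity
  have hdom : IntegrableOn (fun z : ℝ =>
      -(K * log K) * (z ^ (L - 1) * exp (-(L / s * z)))
      - (K * (L - 1)) * (z ^ (L - 1) * exp (-(L / s * z)) * log z)
      + (K * (L / s)) * (z ^ L * exp (-(L / s * z)))) (Ioi 0) :=
    (((integrableOn_rpow_mul_exp_neg_mul_Ioi (by linarith) hr).const_mul _).sub
      ((integrableOn_rpow_mul_exp_neg_mul_mul_log_Ioi (by linarith) hr).const_mul _)).add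
      ((integrableOn_rpow_mul_exp_neg_mul_Ioi (by linarith) hr).const_mul _)
  refine hdom.congr_fun (fun z (hz : 0 < z) => ?_) measurableSet_Ioi
  have hgK : gdens L s z = K * (z ^ (L - 1) * exp (-(L / s * z))) := gdens_eq_const_mul L s z
  have hzL : z ^ L = z ^ (L - 1) * z := by rw [← rpow_add_one hz.ne', sub_add_cancel]
  dsimp only
  rw [hgK, negMulLog, log_mul hK.ne' (by positivity), log_mul (by positivity) (exp_pos _).ne',
    log_rpow hz, log_exp, hzL]
  ring

lemma integrableOn_gdens_rpow (hL : 0 < L) (hs : 0 < s) {β : ℝ} (hβ0 : 0 < β) (hβ1 : β ≤ 1) :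
    IntegrableOn (fun z => gdens L s z ^ β) (Ioi 0) := by
  set K := L ^ L / (s ^ L * Gamma L)
  have hK : 0 < K := by have := Gamma_pos_of_pos hL; positivity
  have hdom : IntegrableOn (fun z : ℝ => K ^ β * (z ^ ((L - 1) * β) * exp (-(L / s * β * z))))
      (Ioi 0) :=
    (integrableOn_rpow_mul_exp_neg_mul_Ioi (by nlinarith) (by positivity)).const_mul _
  refine hdom.congr_fun (fun z (hz : 0 < z) => ?_) measurableSet_Ioi
  have hgK : gdens L s z = K * (z ^ (L - 1) * exp (-(L / s * z))) := gdens_eq_const_mul L s z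
  dsimp only
  rw [hgK, mul_rpow hK.le (by positivity), mul_rpow (by positivity) (exp_pos _).le,
    ← rpow_mul hz.le, ← exp_mul]
  ring_nf

end GammaDensity

theorem stmt15 (L s1 s2 : ℝ) (hL : 0 < L) (h1 : 0 < s1) (h2 : 0 < s2) :
    ((-∫ z in Set.Ioi (0 : ℝ), gdens L s1 z * Real.log (gdens L s1 z))
      - (-∫ z in Set.Ioi (0 : ℝ), gdens L s2 z * Real.log (gdens L s2 z)))
      = Real.log (s1 / s2) ∧
    ∀ β ∈ Set.Ioo (0 : ℝ) 1,
      (1 - β)⁻¹ * Real.log (∫ z in Set.Ioi (0 : ℝ), gdens L s1 z ^ β)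
        - (1 - β)⁻¹ * Real.log (∫ z in Set.Ioi (0 : ℝ), gdens L s2 z ^ β)
        = Real.log (s1 / s2) := by
  have hc : 0 < s1 / s2 := div_pos h1 h2
  have hscale : ∀ z ∈ Ioi (0 : ℝ), gdens L s1 (s1 / s2 * z) = (s1 / s2)⁻¹ * gdens L s2 z :=
    fun z hz => by
      simpa only [div_mul_cancel₀ s1 h2.ne'] using gdens_mul_mul (L := L) hc h2.le (le_of_lt hz)
  constructor
  · have h := integral_negMulLog_Ioi_of_scaling hc hscale (integrableOn_gdens hL h2)
      (integrableOn_negMulLog_gdens hL h2)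
    simp only [negMulLog, neg_mul, integral_neg, integral_gdens hL h2, mul_one] at h
    linarith
  · rintro β ⟨hβ0, hβ1⟩
    have hJ : ∫ z in Ioi 0, gdens L s2 z ^ β ≠ 0 :=
      (setIntegral_Ioi_pos_of_pos (integrableOn_gdens_rpow hL h2 hβ0 hβ1.le)
        fun z hz => rpow_pos_of_pos (gdens_pos hL h2 hz) β).ne'
    rw [integral_rpow_Ioi_of_scaling hc hscale (fun z hz => (gdens_pos hL h2 hz).le) β,
      log_mul (rpow_pos_of_pos hc _).ne' hJ, log_rpow hc]
    field_simp [sub_ne_zero.2 hβ1.ne']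
    ring
end
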